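/- arXiv:2510.23143 — 2 statements merged into one kernel-verified Lean document; each statement's English description precedes it below -/
import Mathlib

section
/- Let Q be the quadratic form on ℂ^N (N = Σ_i (d_i − 1) + (m − 1)) whose matrix is block-diagonal with blocks B₁,…,B_k, C, where B_i has diagonal entries 2D_i and off-diagonal entries M_i = D_i − d (with D_i = (d_i−1)d/d_i, d = ∏ d_j^{d_j}), and C is the (m−1)×(m−1) matrix with diagonal 2α^{m−2} and off-diagonal α^{m−2} for α ≠ 0. Then Q is nondegenerate. -/
/-!
The determinant of a block-diagonal matrix is the product of the blocks' determinants,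
and a block with diagonal `b` and off-diagonal `a` is `(b - a) • (1 + rank one)`, with
determinant `(b - a) ^ (n - 1) * (b + (n - 1) * a)`. For `C` the two factors are
`α ^ (m - 2)` and `m * α ^ (m - 2)`; for `Bᵢ` they are `(2dᵢ - 1) d / dᵢ` and `d` itself,
since `dᵢ Dᵢ = (dᵢ - 1) d`.
-/

namespace Matrix

theorem det_blockDiagonal' {R o : Type*} [CommRing R] [Fintype o] [DecidableEq o]
    {m : o → Type*} [∀ i, Fintype (m i)] [∀ i, DecidableEq (m i)]
    (M : ∀ i, Matrix (m i) (m i) R) :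
    (blockDiagonal' M).det = ∏ i, (M i).det := by
  let : LinearOrder o := LinearOrder.lift' _ (Fintype.equivFin o).injective
  rw [(blockTriangular_blockDiagonal' M).det_fintype]
  refine Finset.prod_congr rfl fun i _ => ?_
  rw [← det_submatrix_equiv_self (Equiv.sigmaSubtype i).symm]
  congr 1
  ext j j'
  exact blockDiagonal'_apply_eq M i j j'

theorem det_of_ite_eq {K n : Type*} [Field K] [Fintype n] [DecidableEq n] [Nonempty n]
    (a b : K) :
    (of fun i j : n => if i = j then b else a).det
      = (b - a) ^ (Fintype.card n - 1) * (b + (Fintype.card n - 1) * a) := by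
  obtain ⟨N, hN⟩ : ∃ N, Fintype.card n = N + 1 :=
    Nat.exists_eq_add_one_of_ne_zero Fintype.card_ne_zero
  rw [hN, Nat.add_sub_cancel]
  push_cast
  by_cases hab : b = a
  · subst hab
    rcases N with _ | N
    · have : Unique n := (Fintype.card_eq_one_iff_nonempty_unique.1 hN).some
      simp [det_unique]
    · obtain ⟨i, j, hij⟩ :=
        Fintype.exists_pair_of_one_lt_card (show 1 < Fintype.card n by omega)
      simp only [ite_self, sub_self, zero_pow N.succ_ne_zero, zero_mul]
      exact det_zero_of_row_eq hij rfl
  · have hba : b - a ≠ 0 := sub_ne_zero.2 hab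
    have hrank : (of fun i j : n => if i = j then b else a) = (b - a) • (1 +
        replicateCol Unit (fun _ => a / (b - a)) * replicateRow Unit (fun _ : n => (1 : K))) := by
      ext i j
      by_cases h : i = j <;> simp [h, mul_apply, mul_add, mul_div_cancel₀ _ hba]
    rw [hrank, det_smul, det_one_add_replicateCol_mul_replicateRow, hN]
    simp only [dotProduct, one_mul, Finset.sum_const, Finset.card_univ, hN, nsmul_eq_mul,
      Nat.cast_add, Nat.cast_one, add_sub_cancel_right]
    field_simp
    ring

theorem det_of_ite_eq_ne_zero {K n : Type*} [Field K] [Fintype n] [DecidableEq n] {a b : K}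
    (hab : b ≠ a) (h : b + (Fintype.card n - 1) * a ≠ 0) :
    (of fun i j : n => if i = j then b else a).det ≠ 0 := by
  cases isEmpty_or_nonempty n
  · simp
  · rw [det_of_ite_eq]
    exact mul_ne_zero (pow_ne_zero _ (sub_ne_zero.2 hab)) h

end Matrix

/-- The Hessian of the quadratic form at the singular point is nondegenerate: the
block-diagonal matrix with blocks `Bᵢ` (diagonal `2Dᵢ`, off-diagonal `Mᵢ = Dᵢ − d`)
of size `dᵢ − 1` and `C` (diagonal `2α^{m−2}`, off-diagonal `α^{m−2}`) of size
`m − 1` has nonzero determinant. -/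
theorem stmt_11 (k : ℕ) (dd : Fin k → ℕ) (hdd : ∀ i, 2 ≤ dd i)
    (m : ℕ) (hm : 2 ≤ m) (α : ℂ) (hα : α ≠ 0)
    (d : ℂ) (hd : d = ∏ i, (dd i : ℂ) ^ (dd i))
    (D M : Fin k → ℂ)
    (hD : ∀ i, D i = ((dd i : ℂ) - 1) * d / (dd i))
    (hM : ∀ i, M i = D i - d)
    (n : Option (Fin k) → ℕ)
    (hn : n none = m - 1) (hns : ∀ i, n (some i) = dd i - 1)
    (B : ∀ o : Option (Fin k), Matrix (Fin (n o)) (Fin (n o)) ℂ)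
    (hBnone : B none = Matrix.of fun s t =>
      if s = t then 2 * α ^ (m - 2) else α ^ (m - 2))
    (hBsome : ∀ i, B (some i) = Matrix.of fun s t =>
      if s = t then 2 * D i else M i) :
    (Matrix.blockDiagonal' B).det ≠ 0 := by
  have hd0 : d ≠ 0 := hd ▸ Finset.prod_ne_zero_iff.2 fun i _ =>
    pow_ne_zero _ (Nat.cast_ne_zero.2 (by have := hdd i; omega))
  rw [Matrix.det_blockDiagonal' B, Fintype.prod_option]
  refine mul_ne_zero ?_ (Finset.prod_ne_zero_iff.2 fun i _ => ?_)
  · have hαm : α ^ (m - 2) ≠ 0 := pow_ne_zero _ hα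
    rw [hBnone]
    refine Matrix.det_of_ite_eq_ne_zero (by rwa [ne_eq, two_mul, add_eq_left]) ?_
    have hCsum : 2 * α ^ (m - 2) + ((m : ℂ) - 1 - 1) * α ^ (m - 2) = m * α ^ (m - 2) := by ring
    rw [Fintype.card_fin, hn, Nat.cast_sub (by omega), Nat.cast_one, hCsum]
    exact mul_ne_zero (Nat.cast_ne_zero.2 (by omega)) hαm
  · have hddi := hdd i
    have hdi : (dd i : ℂ) ≠ 0 := Nat.cast_ne_zero.2 (by omega)
    have h2di : 2 * (dd i : ℂ) - 1 ≠ 0 := by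
      rw [sub_ne_zero]
      exact_mod_cast (show 2 * dd i ≠ 1 by omega)
    have hBdiff : 2 * D i - M i = (2 * dd i - 1) * d / dd i := by
      rw [hM i, hD i]; field_simp; ring
    have hBsum : 2 * D i + ((dd i : ℂ) - 1 - 1) * M i = d := by
      rw [hM i, hD i]; field_simp; ring
    rw [hBsome i]
    refine Matrix.det_of_ite_eq_ne_zero
      (sub_ne_zero.1 (hBdiff ▸ div_ne_zero (mul_ne_zero h2di hd0) hdi)) ?_
    rw [Fintype.card_fin, hns i, Nat.cast_sub (by omega), Nat.cast_one, hBsum]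
    exact hd0
end

section
/- Let d₁,…,d_k ≥ 2 and x_{i,j} ∈ ℂ \ {0} (1 ≤ i ≤ k, 1 ≤ j ≤ d_i), λ ∈ ℂ \ {0}. Suppose ∏_i (Σ_j x_{i,j})^{d_i} = λ·∏_{i,j} x_{i,j} and for every (i,j): d_i·(Σ_l x_{i,l})^{d_i − 1}·∏_{i'≠i}(Σ_l x_{i',l})^{d_{i'}} = λ·∏_{(i',j')≠(i,j)} x_{i',j'}. Then for each i, all x_{i,1},…,x_{i,d_i} are equal. -/
open scoped BigOperators

/-- Vanishing of the gradient of `F = ∏ᵢ(∑ⱼ xᵢⱼ)^{dᵢ} − λ·∏ xᵢⱼ` on the torus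
(with `λ ≠ 0`) forces all coordinates within each group to be equal. -/
theorem stmt_17 (k : ℕ) (d : Fin k → ℕ) (hd : ∀ i, 2 ≤ d i)
    (x : ∀ i : Fin k, Fin (d i) → ℂ) (hx : ∀ i j, x i j ≠ 0)
    (lam : ℂ) (hlam : lam ≠ 0)
    (h0 : ∏ i, (∑ j, x i j) ^ d i = lam * ∏ i, ∏ j, x i j)
    (hgrad : ∀ (i : Fin k) (j : Fin (d i)),
      (d i : ℂ) * (∑ l, x i l) ^ (d i - 1) *
          ∏ i' ∈ Finset.univ.erase i, (∑ l, x i' l) ^ d i' =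
        lam * (∏ i' ∈ Finset.univ.erase i, ∏ j', x i' j') *
          ∏ j' ∈ Finset.univ.erase j, x i j') :
    ∀ (i : Fin k) (j l : Fin (d i)), x i j = x i l := by
  intro i j l
  have h1 := hgrad i j
  have h2 := hgrad i l
  have hA : lam * (∏ i' ∈ Finset.univ.erase i, ∏ j', x i' j') ≠ 0 := by
    refine mul_ne_zero hlam (Finset.prod_ne_zero_iff.2 fun i' _ =>
      Finset.prod_ne_zero_iff.2 fun j' _ => hx i' j')
  have heq : (∏ j' ∈ Finset.univ.erase j, x i j') =
      ∏ j' ∈ Finset.univ.erase l, x i j' := by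
    have := h1.symm.trans h2
    exact mul_left_cancel₀ hA this
  have hj := Finset.mul_prod_erase Finset.univ (x i) (Finset.mem_univ j)
  have hl := Finset.mul_prod_erase Finset.univ (x i) (Finset.mem_univ l)
  have : x i j * ∏ j' ∈ Finset.univ.erase j, x i j' =
      x i l * ∏ j' ∈ Finset.univ.erase j, x i j' := by
    rw [hj, heq, hl]
  exact mul_right_cancel₀
    (Finset.prod_ne_zero_iff.2 fun j' _ => hx i j') this
end
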